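/- arXiv:1901.08745 — 2 statements merged into one kernel-verified Lean document; each statement's English description precedes it below -/
import Mathlib

section
/- Let $\Phi:[1,\infty)\to(0,\infty)$ be a continuous strictly increasing function with derivative $\Phi'(r)=\ell(r)/r$ where $\ell:(0,\infty)\to(0,\infty)$ is continuous, and let $\ell^*(r)=\sup_{u\in[1,r]}\ell(u)$, with $C_3 \ge 1$ a constant such that $\ell(r) \le \ell^*(r) \le C_3 \ell(r)$ for $r>2$. Then for all $u \ge v > \Phi(2)$ in the range of $\Phi$, $\Phi^{-1}(u)/\Phi^{-1}(v) \le \exp\!\big(C_3 (u-v)/\ell^*(\Phi^{-1}(v))\big)$. -/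
/-!
On `[b, a]` we have `ℓ*(b) ≤ ℓ*(r) ≤ C₃ ℓ(r)`, so `C₃ Φ' ≥ ℓ*(b) / r` there. Hence
`r ↦ C₃ Φ(r) - ℓ*(b) log r` is nondecreasing on `[b, a]`, i.e.
`ℓ*(b) log (a / b) ≤ C₃ (Φ(a) - Φ(b))`; exponentiate.
-/

open Real Set

theorem sSup_image_Icc_mono {f : ℝ → ℝ} {c s t : ℝ} (hf : ContinuousOn f (Icc c t))
    (hcs : c ≤ s) (hst : s ≤ t) : sSup (f '' Icc c s) ≤ sSup (f '' Icc c t) :=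
  csSup_le_csSup (isCompact_Icc.bddAbove_image hf) ((nonempty_Icc.2 hcs).image f)
    (image_mono (Icc_subset_Icc_right hst))

theorem mul_log_div_le_sub_of_hasDerivAt {Φ φ : ℝ → ℝ} {m a b : ℝ} (hb : 0 < b) (hba : b ≤ a)
    (hΦ : ∀ r ∈ Icc b a, HasDerivAt Φ (φ r) r) (hφ : ∀ r ∈ Icc b a, m / r ≤ φ r) :
    m * log (a / b) ≤ Φ a - Φ b := by
  have hpos : ∀ r ∈ Icc b a, 0 < r := fun r hr => hb.trans_le hr.1
  have hderiv : ∀ r ∈ Icc b a, HasDerivAt (fun r => Φ r - m * log r) (φ r - m / r) r :=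
    fun r hr => by
      rw [div_eq_mul_inv]
      exact (hΦ r hr).sub ((hasDerivAt_log (hpos r hr).ne').const_mul m)
  have hmono : MonotoneOn (fun r => Φ r - m * log r) (Icc b a) :=
    monotoneOn_of_hasDerivWithinAt_nonneg (convex_Icc b a)
      (fun r hr => (hderiv r hr).continuousAt.continuousWithinAt)
      (fun r hr => (hderiv r (interior_subset hr)).hasDerivWithinAt)
      (fun r hr => sub_nonneg.2 (hφ r (interior_subset hr)))
  have hab := hmono ⟨le_rfl, hba⟩ ⟨hba, le_rfl⟩ hba
  rw [log_div (hpos a ⟨hba, le_rfl⟩).ne' hb.ne']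
  linarith

-- `a` and `b` stand for `Φ⁻¹(u)` and `Φ⁻¹(v)` of the informal statement.
theorem stmt_5_general (ℓ Φ : ℝ → ℝ) (C₃ : ℝ)
    (hℓpos : ∀ x > (0:ℝ), 0 < ℓ x) (hℓcont : ContinuousOn ℓ (Set.Ioi 0))
    (hΦderiv : ∀ r ≥ (1:ℝ), HasDerivAt Φ (ℓ r / r) r)
    (ℓstar : ℝ → ℝ)
    (hℓstar : ∀ r ≥ (1:ℝ), ℓstar r = sSup (ℓ '' Set.Icc 1 r))
    (hbound : ∀ r > (2:ℝ), ℓ r ≤ ℓstar r ∧ ℓstar r ≤ C₃ * ℓ r) :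
    ∀ a b : ℝ, 2 < b → b ≤ a →
      a / b ≤ Real.exp (C₃ * (Φ a - Φ b) / ℓstar b) := by
  intro a b hb hba
  have hb0 : 0 < b := by linarith
  have hℓstar_pos : 0 < ℓstar b := (hℓpos b hb0).trans_le (hbound b hb).1
  have hℓstar_le : ∀ r ∈ Icc b a, ℓstar b ≤ C₃ * ℓ r := fun r hr => by
    have hr2 : 2 < r := hb.trans_le hr.1
    refine le_trans ?_ (hbound r hr2).2
    rw [hℓstar b (by linarith), hℓstar r (by linarith)]
    exact sSup_image_Icc_mono (hℓcont.mono fun x hx => one_pos.trans_le hx.1) (by linarith) hr.1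
  have hlog : ℓstar b * log (a / b) ≤ C₃ * Φ a - C₃ * Φ b :=
    mul_log_div_le_sub_of_hasDerivAt hb0 hba
      (fun r hr => (hΦderiv r (by linarith [hr.1])).const_mul C₃)
      (fun r hr => by
        rw [← mul_div_assoc]
        exact div_le_div_of_nonneg_right (hℓstar_le r hr) (by linarith [hr.1]))
  calc a / b = exp (log (a / b)) := (exp_log (div_pos (hb0.trans_le hba) hb0)).symm
    _ ≤ exp (C₃ * (Φ a - Φ b) / ℓstar b) := by
      rw [exp_le_exp, le_div_iff₀' hℓstar_pos, mul_sub]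
      exact hlog

/-- growth control of the inverse of `Φ` via `ℓ*`.
    Stated with `a = Φ⁻¹(u)`, `b = Φ⁻¹(v)`. -/
theorem stmt_5 (ℓ Φ : ℝ → ℝ) (C₃ : ℝ) (hC₃ : 1 ≤ C₃)
    (hℓpos : ∀ x > (0:ℝ), 0 < ℓ x) (hℓcont : ContinuousOn ℓ (Set.Ioi 0))
    (hΦderiv : ∀ r ≥ (1:ℝ), HasDerivAt Φ (ℓ r / r) r)
    (hΦmono : StrictMonoOn Φ (Set.Ici 1))
    (hΦcont : ContinuousOn Φ (Set.Ici 1))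
    (ℓstar : ℝ → ℝ)
    (hℓstar : ∀ r ≥ (1:ℝ), ℓstar r = sSup (ℓ '' Set.Icc 1 r))
    (hbound : ∀ r > (2:ℝ), ℓ r ≤ ℓstar r ∧ ℓstar r ≤ C₃ * ℓ r) :
    ∀ a b : ℝ, 2 < b → b ≤ a →
      a / b ≤ Real.exp (C₃ * (Φ a - Φ b) / ℓstar b) :=
  stmt_5_general ℓ Φ C₃ hℓpos hℓcont hΦderiv ℓstar hℓstar hbound
end

section
/- Let $Y$ be a one-dimensional pure jump symmetric L\'evy process with L\'evy density $\nu(y)$ (symmetric, radially non-increasing on $(0,\infty)$, absolutely continuous with non-increasing density derivative assumptions as needed) satisfying $\kappa_1 y^{-1}\ell(y^{-1}) \le \nu(y) \le \kappa_2 y^{-1}\ell(y^{-1})$ for $y>0$, where $\ell$ satisfies the weak upper scaling condition $\ell(R)/\ell(r) \le c(R/r)^{\alpha_2}$ for $1\le r \le R$ with $\alpha_2 < 1$. Let $\psi(x) = 2\int_0^\infty (1-\cos(xy))\nu(y)\,dy$ be its characteristic exponent. Then for every $\lambda > 1$ there exists $c(\lambda)>0$ such that $\psi(\lambda x) - \psi(x)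 \le c(\lambda)\,\ell(x)$ for all $x \ge 1$. -/
/-!
For `x ≥ 1` write `ψ(λx) - ψ(x) = 2 ∫ (cos (xy) - cos (λxy)) ν(y) dy` and split at `y = 1/x`.
Near the origin `cos (xy) - cos (λxy) ≤ (λxy)² / 2`, while the upper scaling of `ℓ` gives
`ν(y) ≤ κ₂ c x^(-α₂) ℓ(x) y^(-1-α₂)` for `y ≤ 1/x`; integrating `y^(1-α₂)` over `(0, 1/x]`
produces exactly the factor `x^(α₂-2)` that cancels the powers of `x`. On `(1/x, ∞)` the
density is non-increasing, so a second mean value bound gives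
`|∫ cos (by) ν(y) dy| ≤ 2 ν(1/x) / b`, and `ν(1/x) ≤ κ₂ x ℓ(x)`.
-/

open MeasureTheory Set Real

theorem abs_setIntegral_Ioo_cos_mul_le {b : ℝ} (hb : 0 < b) (l u : ℝ) :
    |∫ t in Ioo l u, cos (b * t)| ≤ 2 / b := by
  rcases le_or_gt u l with hul | hlu
  · rw [Ioo_eq_empty hul.not_gt]
    simp only [Measure.restrict_empty, integral_zero_measure, abs_zero]
    positivity
  rw [← integral_Ioc_eq_integral_Ioo, ← intervalIntegral.integral_of_le hlu.le,
    intervalIntegral.integral_comp_mul_left (fun t => cos t) hb.ne', integral_cos,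
    smul_eq_mul, abs_mul, abs_inv, abs_of_pos hb, inv_mul_eq_div]
  gcongr
  calc |sin (b * u) - sin (b * l)| ≤ |sin (b * u)| + |sin (b * l)| :=
        abs_sub _ _
    _ ≤ 2 := by linarith [abs_sin_le_one (b * u), abs_sin_le_one (b * l)]

theorem abs_setIntegral_le_of_ordConnected {f : ℝ → ℝ} {a K : ℝ} {E : Set ℝ}
    (hK : ∀ l u, a ≤ l → |∫ t in Ioo l u, f t| ≤ K)
    (hE : E.OrdConnected) (hEa : E ⊆ Ioi a) (hEb : BddAbove E) :
    |∫ t in E, f t| ≤ K := by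
  rcases E.eq_empty_or_nonempty with rfl | hne
  · simpa using hK a a le_rfl
  have hEb' : BddBelow E := ⟨a, fun t ht => (hEa ht).le⟩
  have hIcc : E ⊆ Icc (sInf E) (sSup E) := subset_Icc_csInf_csSup hEb' hEb
  have hIoo : Ioo (sInf E) (sSup E) ⊆ E :=
    IsConnected.Ioo_csInf_csSup_subset ⟨hne, hE.isPreconnected⟩ hEb' hEb
  have hae : Ioo (sInf E) (sSup E) =ᵐ[volume] E := by
    refine ae_eq_of_subset_of_measure_ge hIoo ?_ measurableSet_Ioo.nullMeasurableSet
      (measure_mono hIcc |>.trans_lt measure_Icc_lt_top).ne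
    exact (measure_mono hIcc).trans_eq (by rw [volume_Icc, volume_Ioo])
  rw [← setIntegral_congr_set hae]
  exact hK _ _ (le_csInf hne fun t ht => (hEa ht).le)

theorem Antitone.bddAbove_Ioi_inter_setOf_lt {g : ℝ → ℝ} {a s : ℝ} (hg : Antitone g)
    (hgi : IntegrableOn g (Ioi a)) (hs : 0 < s) :
    BddAbove (Ioi a ∩ {t | s < g t}) := by
  by_contra hunb
  have hsub : Ioi a ⊆ {t | s < g t} := fun y _ => by
    obtain ⟨t, ht, hyt⟩ := not_bddAbove_iff.1 hunb y
    exact ht.2.trans_le (hg hyt.le)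
  have hfin := hgi.measure_gt_lt_top hs
  rw [Measure.restrict_apply' measurableSet_Ioi, inter_eq_right.2 hsub, volume_Ioi] at hfin
  exact hfin.ne rfl

/-- Layer cake: `g t = ∫ 1{s < g t} ds`, and after swapping the integrals each superlevel set
of `g` on `(a, ∞)` is an interval, over which `∫ f` is at most `K`. -/
theorem abs_setIntegral_mul_le_of_antitone {f g : ℝ → ℝ} {a B K : ℝ}
    (hf : Measurable f) (hfB : ∀ t, |f t| ≤ B)
    (hK : ∀ l u, a ≤ l → |∫ t in Ioo l u, f t| ≤ K)
    (hg : Antitone g) (hg0 : ∀ t, 0 ≤ g t) (hgi : IntegrableOn g (Ioi a)) :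
    |∫ t in Ioi a, f t * g t| ≤ K * g a := by
  have hR : MeasurableSet (regionBetween 0 g (Ioi a)) :=
    measurableSet_regionBetween measurable_const hg.measurable measurableSet_Ioi
  have hRfin : volume (regionBetween 0 g (Ioi a)) ≠ ⊤ := by
    rw [Measure.volume_eq_prod, volume_regionBetween_eq_integral (f := 0) integrableOn_zero
      hgi measurableSet_Ioi fun t _ => hg0 t]
    exact ENNReal.ofReal_ne_top
  set Φ : ℝ × ℝ → ℝ := (regionBetween 0 g (Ioi a)).indicator (fun p => f p.1)
  have hΦ : Integrable (Function.uncurry fun t s => Φ (t, s)) (volume.prod volume) := by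
    rw [← Measure.volume_eq_prod]
    exact (integrable_indicator_iff hR).2 <| Measure.integrableOn_of_bounded hRfin
      (hf.comp measurable_fst).aestronglyMeasurable (ae_of_all _ fun p => hfB p.1)
  have h_t : ∀ t, ∫ s, Φ (t, s) = (Ioi a).indicator (fun t => f t * g t) t := by
    intro t
    by_cases ht : a < t
    · have : (fun s => Φ (t, s)) = (Ioo 0 (g t)).indicator fun _ => f t := by
        ext s; simp [Φ, regionBetween, indicator, ht]
      rw [this, integral_indicator_const _ measurableSet_Ioo, indicator_of_mem (mem_Ioi.2 ht),
        Real.volume_real_Ioo_of_le (hg0 t), smul_eq_mul, sub_zero, mul_comm]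
    · simp [Φ, regionBetween, indicator, ht]
  have h_s : ∀ s, ‖∫ t, Φ (t, s)‖ ≤ (Ioo 0 (g a)).indicator (fun _ => K) s := by
    intro s
    by_cases hs : s ∈ Ioo 0 (g a)
    · have hE : MeasurableSet (Ioi a ∩ {t | s < g t}) :=
        measurableSet_Ioi.inter (measurableSet_lt measurable_const hg.measurable)
      have : (fun t => Φ (t, s)) = (Ioi a ∩ {t | s < g t}).indicator f := by
        ext t; simp [Φ, regionBetween, indicator, hs.1]
      rw [this, integral_indicator hE, indicator_of_mem hs, Real.norm_eq_abs]
      refine abs_setIntegral_le_of_ordConnected hK ?_ inter_subset_left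
        (hg.bddAbove_Ioi_inter_setOf_lt hgi hs.1)
      exact ordConnected_Ioi.inter ⟨fun _ _ y hy z hz => hy.trans_le (hg hz.2)⟩
    · have : ∀ t, Φ (t, s) = 0 := by
        intro t
        simp only [Φ, regionBetween, indicator, mem_Ioi, mem_Ioo, Pi.zero_apply]
        exact if_neg fun ⟨hat, hs0, hsg⟩ => hs ⟨hs0, hsg.trans_le (hg hat.le)⟩
      simp [this, indicator_of_notMem hs]
  calc |∫ t in Ioi a, f t * g t| = ‖∫ s, ∫ t, Φ (t, s)‖ := by
        rw [← integral_indicator measurableSet_Ioi, ← integral_integral_swap hΦ,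
          Real.norm_eq_abs]
        simp only [h_t]
    _ ≤ ∫ s, (Ioo 0 (g a)).indicator (fun _ => K) s :=
        norm_integral_le_of_norm_le ((integrable_indicator_iff measurableSet_Ioo).2
          (integrableOn_const measure_Ioo_lt_top.ne)) (ae_of_all _ h_s)
    _ = K * g a := by
        rw [integral_indicator_const _ measurableSet_Ioo,
          Real.volume_real_Ioo_of_le (hg0 a), smul_eq_mul, sub_zero, mul_comm]

theorem abs_setIntegral_mul_le_of_antitoneOn {f g : ℝ → ℝ} {a B K : ℝ}
    (hf : Measurable f) (hfB : ∀ t, |f t| ≤ B)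
    (hK : ∀ l u, a ≤ l → |∫ t in Ioo l u, f t| ≤ K)
    (hg : AntitoneOn g (Ici a)) (hg0 : ∀ t ∈ Ici a, 0 ≤ g t) (hgi : IntegrableOn g (Ioi a)) :
    |∫ t in Ioi a, f t * g t| ≤ K * g a := by
  have hG : ∀ t ∈ Ioi a, g (max t a) = g t := fun t ht => by rw [max_eq_left (le_of_lt ht)]
  have key := abs_setIntegral_mul_le_of_antitone (g := fun t => g (max t a)) hf hfB hK
    (fun x y hxy => hg (le_max_right x a) (le_max_right y a) (max_le_max hxy le_rfl))
    (fun t => hg0 _ (le_max_right t a))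
    (hgi.congr_fun (fun t ht => (hG t ht).symm) measurableSet_Ioi)
  rwa [setIntegral_congr_fun (g := fun t => f t * g t) measurableSet_Ioi
    fun t ht => by rw [hG t ht], max_self] at key

theorem abs_setIntegral_cos_mul_le {g : ℝ → ℝ} {a b : ℝ} (hb : 0 < b)
    (hg : AntitoneOn g (Ici a)) (hg0 : ∀ t ∈ Ici a, 0 ≤ g t) (hgi : IntegrableOn g (Ioi a)) :
    |∫ t in Ioi a, cos (b * t) * g t| ≤ 2 / b * g a :=
  abs_setIntegral_mul_le_of_antitoneOn (by fun_prop) (fun t => abs_cos_le_one (b * t))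
    (fun l u _ => abs_setIntegral_Ioo_cos_mul_le hb l u) hg hg0 hgi

theorem one_sub_cos_mul_le (z y : ℝ) : 1 - cos (z * y) ≤ (z ^ 2 + 2) * min 1 (y ^ 2) := by
  rcases le_total (y ^ 2) 1 with hy | hy
  · rw [min_eq_right hy]
    nlinarith [one_sub_sq_div_two_le_cos (x := z * y), sq_nonneg z, sq_nonneg y]
  · rw [min_eq_left hy]
    nlinarith [neg_one_le_cos (z * y), sq_nonneg z]

theorem integrableOn_one_sub_cos_mul_mul {ν : ℝ → ℝ}
    (hνm : AEStronglyMeasurable ν (volume.restrict (Ioi 0)))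
    (hint : IntegrableOn (fun y => min 1 (y ^ 2) * ν y) (Ioi 0)) (z : ℝ) :
    IntegrableOn (fun y => (1 - cos (z * y)) * ν y) (Ioi 0) := by
  refine (hint.norm.const_mul (z ^ 2 + 2)).mono'
    ((by fun_prop : Continuous fun y => 1 - cos (z * y)).aestronglyMeasurable.mul hνm)
    (ae_of_all _ fun y => ?_)
  rw [norm_mul, norm_mul, norm_of_nonneg (sub_nonneg.2 (cos_le_one _)),
    norm_of_nonneg (le_min zero_le_one (sq_nonneg y)), ← mul_assoc]
  exact mul_le_mul_of_nonneg_right (one_sub_cos_mul_le z y) (norm_nonneg _)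

theorem integrableOn_cos_sub_cos_mul_mul {ν : ℝ → ℝ}
    (hνm : AEStronglyMeasurable ν (volume.restrict (Ioi 0)))
    (hint : IntegrableOn (fun y => min 1 (y ^ 2) * ν y) (Ioi 0)) (x z : ℝ) :
    IntegrableOn (fun y => (cos (x * y) - cos (z * y)) * ν y) (Ioi 0) :=
  ((integrableOn_one_sub_cos_mul_mul hνm hint z).sub
    (integrableOn_one_sub_cos_mul_mul hνm hint x)).congr_fun
    (fun y _ => by simp only [Pi.sub_apply]; ring) measurableSet_Ioi

theorem integrableOn_Ioi_of_integrableOn_min_one_sq_mul {ν : ℝ → ℝ} {a : ℝ}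
    (hνm : AEStronglyMeasurable ν (volume.restrict (Ioi 0)))
    (hint : IntegrableOn (fun y => min 1 (y ^ 2) * ν y) (Ioi 0)) (ha : 0 < a) :
    IntegrableOn ν (Ioi a) := by
  have hsub : Ioi a ⊆ Ioi 0 := Ioi_subset_Ioi ha.le
  have hm : 0 < min 1 (a ^ 2) := by positivity
  refine ((hint.mono_set hsub).norm.const_mul (min 1 (a ^ 2))⁻¹).mono'
    (hνm.mono_measure (Measure.restrict_mono hsub le_rfl)) ?_
  filter_upwards [self_mem_ae_restrict measurableSet_Ioi] with y hy
  have hay : min 1 (a ^ 2) ≤ min 1 (y ^ 2) :=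
    min_le_min_left _ (pow_le_pow_left₀ ha.le (le_of_lt hy) 2)
  rw [norm_mul, norm_of_nonneg (hm.le.trans hay)]
  calc ‖ν y‖ = (min 1 (a ^ 2))⁻¹ * (min 1 (a ^ 2) * ‖ν y‖) := by field_simp
    _ ≤ (min 1 (a ^ 2))⁻¹ * (min 1 (y ^ 2) * ‖ν y‖) := by gcongr

theorem setIntegral_Ioi_cos_sub_cos_mul_le {ν : ℝ → ℝ} {a x z : ℝ} (hx : 0 < x) (hxz : x ≤ z)
    (hν : AntitoneOn ν (Ici a)) (hν0 : ∀ y ∈ Ici a, 0 ≤ ν y) (hint : IntegrableOn ν (Ioi a)) :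
    ∫ y in Ioi a, (cos (x * y) - cos (z * y)) * ν y ≤ 4 / x * ν a := by
  have hcos : ∀ b, IntegrableOn (fun y => cos (b * y) * ν y) (Ioi a) := fun b =>
    hint.bdd_mul (by fun_prop : Continuous fun y => cos (b * y)).aestronglyMeasurable
      (ae_of_all _ fun y => abs_cos_le_one (b * y))
  have hx' := abs_setIntegral_cos_mul_le hx hν hν0 hint
  have hz' := abs_setIntegral_cos_mul_le (hx.trans_le hxz) hν hν0 hint
  have hzx : 2 / z * ν a ≤ 2 / x * ν a := by gcongr; exact hν0 a self_mem_Ici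
  have h4 : 4 / x * ν a = 2 / x * ν a + 2 / x * ν a := by ring
  simp only [sub_mul]
  rw [integral_sub (hcos x) (hcos z)]
  linarith [le_abs_self (∫ y in Ioi a, cos (x * y) * ν y),
    neg_abs_le (∫ y in Ioi a, cos (z * y) * ν y)]

theorem setIntegral_Ioc_cos_sub_cos_mul_le {ν ℓ : ℝ → ℝ} {κ₂ c α₂ lam x : ℝ}
    (hκ₂ : 0 ≤ κ₂) (hα₂ : α₂ < 2) (hx : 1 ≤ x) (hℓx : 0 < ℓ x) (hν0 : ∀ y > 0, 0 ≤ ν y)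
    (hν : ∀ y > 0, ν y ≤ κ₂ * y⁻¹ * ℓ y⁻¹)
    (hscal : ∀ r R : ℝ, 1 ≤ r → r ≤ R → ℓ R / ℓ r ≤ c * (R / r) ^ α₂)
    (hD : IntegrableOn (fun y => (cos (x * y) - cos (lam * x * y)) * ν y) (Ioc 0 x⁻¹)) :
    ∫ y in Ioc 0 x⁻¹, (cos (x * y) - cos (lam * x * y)) * ν y
      ≤ lam ^ 2 * κ₂ * c / (2 * (2 - α₂)) * ℓ x := by
  have hx0 : 0 < x := one_pos.trans_le hx
  have hpoint : ∀ y ∈ Ioc 0 x⁻¹,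
      (cos (x * y) - cos (lam * x * y)) * ν y
        ≤ lam ^ 2 * κ₂ * c * ℓ x / 2 * x ^ (2 - α₂) * y ^ (1 - α₂) := by
    rintro y ⟨hy0, hyx⟩
    have hxy : x ≤ y⁻¹ := (le_inv_comm₀ hy0 hx0).1 hyx
    have hℓy : ℓ y⁻¹ ≤ c * (x * y) ^ (-α₂) * ℓ x := by
      have hxy' : (y⁻¹ / x) ^ α₂ = (x * y) ^ (-α₂) := by
        rw [rpow_neg (by positivity), ← inv_rpow (by positivity), mul_inv, div_eq_inv_mul]
      have := hscal x y⁻¹ hx hxy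
      rwa [div_le_iff₀ hℓx, hxy'] at this
    have hcos : cos (x * y) - cos (lam * x * y) ≤ (lam * x * y) ^ 2 / 2 := by
      linarith [one_sub_sq_div_two_le_cos (x := lam * x * y), cos_le_one (x * y)]
    calc (cos (x * y) - cos (lam * x * y)) * ν y ≤ (lam * x * y) ^ 2 / 2 * ν y :=
          mul_le_mul_of_nonneg_right hcos (hν0 y hy0)
      _ ≤ (lam * x * y) ^ 2 / 2 * (κ₂ * y⁻¹ * (c * (x * y) ^ (-α₂) * ℓ x)) := by
          gcongr
          exact (hν y hy0).trans (by gcongr)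
      _ = lam ^ 2 * κ₂ * c * ℓ x / 2 * x ^ (2 - α₂) * y ^ (1 - α₂) := by
          rw [mul_rpow hx0.le hy0.le, sub_eq_add_neg, sub_eq_add_neg, rpow_add hx0, rpow_add hy0,
            rpow_one, rpow_two]
          field_simp
  have hint_rpow : IntegrableOn
      (fun y => lam ^ 2 * κ₂ * c * ℓ x / 2 * x ^ (2 - α₂) * y ^ (1 - α₂)) (Ioc 0 x⁻¹) :=
    ((intervalIntegral.intervalIntegrable_rpow' (by linarith)).1).const_mul _
  calc ∫ y in Ioc 0 x⁻¹, (cos (x * y) - cos (lam * x * y)) * ν y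
      ≤ ∫ y in Ioc 0 x⁻¹, lam ^ 2 * κ₂ * c * ℓ x / 2 * x ^ (2 - α₂) * y ^ (1 - α₂) :=
        setIntegral_mono_on hD hint_rpow measurableSet_Ioc hpoint
    _ = lam ^ 2 * κ₂ * c * ℓ x / 2 * x ^ (2 - α₂) * ((x ^ (2 - α₂))⁻¹ / (2 - α₂)) := by
        rw [integral_const_mul, ← intervalIntegral.integral_of_le (by positivity),
          integral_rpow (Or.inl (by linarith)), zero_rpow (by linarith), inv_rpow hx0.le]
        ring_nf
    _ = lam ^ 2 * κ₂ * c / (2 * (2 - α₂)) * ℓ x := by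
        have : x ^ (2 - α₂) ≠ 0 := (rpow_pos_of_pos hx0 _).ne'
        have : 2 - α₂ ≠ 0 := by linarith
        field_simp

theorem stmt_8_general (ν ℓ : ℝ → ℝ) (κ₁ κ₂ c α₂ : ℝ)
    (hκ₂ : 0 < κ₂) (hc : 0 < c) (hα₂ : α₂ < 1)
    (hℓpos : ∀ x > (0:ℝ), 0 < ℓ x)
    (hνpos : ∀ y > (0:ℝ), 0 < ν y)
    (hνmono : ∀ r s : ℝ, 0 < r → r ≤ s → ν s ≤ ν r)
    (hν : ∀ y > (0:ℝ), κ₁ * y⁻¹ * ℓ y⁻¹ ≤ ν y ∧ ν y ≤ κ₂ * y⁻¹ * ℓ y⁻¹)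
    (hscal : ∀ r R : ℝ, 1 ≤ r → r ≤ R → ℓ R / ℓ r ≤ c * (R / r) ^ α₂)
    (hint : IntegrableOn (fun y => min 1 (y ^ 2) * ν y) (Set.Ioi (0:ℝ)))
    (ψ : ℝ → ℝ)
    (hψ : ∀ x, ψ x = 2 * ∫ y in Set.Ioi (0:ℝ), (1 - Real.cos (x * y)) * ν y) :
    ∀ lam > (1:ℝ), ∃ C > (0:ℝ), ∀ x ≥ (1:ℝ), ψ (lam * x) - ψ x ≤ C * ℓ x := by
  intro lam hlam
  have hα₂' : 0 < 2 - α₂ := by linarith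
  refine ⟨lam ^ 2 * κ₂ * c / (2 - α₂) + 8 * κ₂, by positivity, fun x hx => ?_⟩
  have hx0 : 0 < x := one_pos.trans_le hx
  have ha : 0 < x⁻¹ := inv_pos.2 hx0
  have hanti : AntitoneOn ν (Ioi 0) := fun r hr s _ hrs => hνmono r s hr hrs
  have hνm : AEStronglyMeasurable ν (volume.restrict (Ioi 0)) :=
    (aemeasurable_restrict_of_antitoneOn measurableSet_Ioi hanti).aestronglyMeasurable
  have hD := integrableOn_cos_sub_cos_mul_mul hνm hint x (lam * x)
  have hdiff : ψ (lam * x) - ψ x = 2 * ∫ y in Ioi 0, (cos (x * y) - cos (lam * x * y)) * ν y := by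
    rw [hψ, hψ, ← mul_sub, ← integral_sub (integrableOn_one_sub_cos_mul_mul hνm hint _)
      (integrableOn_one_sub_cos_mul_mul hνm hint x)]
    congr 2 with y
    ring
  have hsmall := setIntegral_Ioc_cos_sub_cos_mul_le hκ₂.le (by linarith) hx (hℓpos x hx0)
    (fun y hy => (hνpos y hy).le) (fun y hy => (hν y hy).2) hscal (hD.mono_set Ioc_subset_Ioi_self)
  have hlarge := setIntegral_Ioi_cos_sub_cos_mul_le hx0 (le_mul_of_one_le_left hx0.le hlam.le)
    (hanti.mono (Ici_subset_Ioi.2 ha)) (fun y hy => (hνpos y (ha.trans_le hy)).le)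
    (integrableOn_Ioi_of_integrableOn_min_one_sq_mul hνm hint ha)
  have hνa : ν x⁻¹ ≤ κ₂ * x * ℓ x := by simpa only [inv_inv] using (hν x⁻¹ ha).2
  rw [hdiff, ← intervalIntegral.integral_interval_add_Ioi hD (hD.mono_set (Ioi_subset_Ioi ha.le)),
    intervalIntegral.integral_of_le ha.le]
  calc 2 * ((∫ y in Ioc 0 x⁻¹, (cos (x * y) - cos (lam * x * y)) * ν y)
        + ∫ y in Ioi x⁻¹, (cos (x * y) - cos (lam * x * y)) * ν y)
      ≤ 2 * (lam ^ 2 * κ₂ * c / (2 * (2 - α₂)) * ℓ x + 4 / x * ν x⁻¹) := by linarith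
    _ ≤ 2 * (lam ^ 2 * κ₂ * c / (2 * (2 - α₂)) * ℓ x + 4 / x * (κ₂ * x * ℓ x)) := by gcongr
    _ = (lam ^ 2 * κ₂ * c / (2 - α₂) + 8 * κ₂) * ℓ x := by field_simp; ring

/-- `ψ(λx) - ψ(x) ≤ c(λ) ℓ(x)` for `x ≥ 1` in dimension one. -/
theorem stmt_8 (ν ℓ : ℝ → ℝ) (κ₁ κ₂ c α₂ : ℝ)
    (hκ₁ : 0 < κ₁) (hκ₂ : 0 < κ₂) (hc : 0 < c) (hα₂ : α₂ < 1)
    (hℓpos : ∀ x > (0:ℝ), 0 < ℓ x)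
    (hνpos : ∀ y > (0:ℝ), 0 < ν y)
    (hνmono : ∀ r s : ℝ, 0 < r → r ≤ s → ν s ≤ ν r)
    (hν : ∀ y > (0:ℝ), κ₁ * y⁻¹ * ℓ y⁻¹ ≤ ν y ∧ ν y ≤ κ₂ * y⁻¹ * ℓ y⁻¹)
    (hscal : ∀ r R : ℝ, 1 ≤ r → r ≤ R → ℓ R / ℓ r ≤ c * (R / r) ^ α₂)
    (hint : IntegrableOn (fun y => min 1 (y ^ 2) * ν y) (Set.Ioi (0:ℝ)))
    (ψ : ℝ → ℝ)
    (hψ : ∀ x, ψ x = 2 * ∫ y in Set.Ioi (0:ℝ), (1 - Real.cos (x * y)) * ν y) :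
    ∀ lam > (1:ℝ), ∃ C > (0:ℝ), ∀ x ≥ (1:ℝ), ψ (lam * x) - ψ x ≤ C * ℓ x :=
  stmt_8_general ν ℓ κ₁ κ₂ c α₂ hκ₂ hc hα₂ hℓpos hνpos hνmono hν hscal hint ψ hψ
end
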